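/- arXiv:1901.06741 — 6 statements merged into one kernel-verified Lean document; each statement's English description precedes it below -/
import Mathlib

section
/- For every function k : ℕ → ℕ with k(n)·log(n)/n^{1/3} → 0 as n → ∞, there exist a constant C > 0 and a threshold n₀ such that for every prime power q with n = q² ≥ n₀ and k(n) ≥ 1, there exists a binary primitive linear [n + r, n, k(n)]^B batch code with redundancy r ≤ C·k(n)^{3/2}·√n·log n. -/
/-- A binary primitive linear `[N, n, k]` batch code: an injective `𝔽₂`-linear
encoding map such that every multiset request of `k` coordinates (given by a
function `r : Fin k → Fin n`) admits `k` pairwise disjoint recovering sets. -/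
def IsBatchCode (N n k : ℕ)
    (enc : (Fin n → ZMod 2) →ₗ[ZMod 2] (Fin N → ZMod 2)) : Prop :=
  Function.Injective enc ∧
  ∀ r : Fin k → Fin n, ∃ R : Fin k → Finset (Fin N),
    (∀ t₁ t₂ : Fin k, t₁ ≠ t₂ → Disjoint (R t₁) (R t₂)) ∧
    ∀ (x : Fin n → ZMod 2) (t : Fin k), x (r t) = ∑ p ∈ R t, enc x p

/-!
The code is systematic and adds parity bits: for each of `d ≈ 10 k log₂ n` maps
`ω l : [n] → [m]` ("layers", `m ≈ 4 √(k n)`), the parity of every block `ω l ⁻¹' {b}`.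
Coordinate `u` is recovered from the parity of its block in some layer together with the other
coordinates of that block, so a request is served by giving its entries distinct layers in which
their blocks have size at most `S ≈ √(n / k)` and the later punctured blocks avoid the earlier
blocks. Layers are assigned greedily. For a uniformly random choice of layers, once the layers of
the earlier entries are fixed, a fresh layer fails for the next entry with probability at most
`1/2` (Markov's inequality for the block size, a union bound over the at most `k S` forbidden
coordinates), independently over the at least `d - k` fresh layers. A union bound over the
`n ^ k · k · d ^ k` possible failures therefore leaves a choice of layers for which the greedy
assignment never gets stuck, and the redundancy is `d m = O(k^{3/2} √n log n)`.
-/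

open Finset Function Fintype

namespace BatchCode

section Counting

variable {ι X : Type*} [Fintype ι] [DecidableEq ι] [Fintype X] [DecidableEq X]

theorem card_filter_forall_notMem_mem_le (L : Finset ι) {B : (ι → X) → Finset X}
    (hB : DependsOn B L) {c : ℕ} (hc : ∀ ω, #(B ω) ≤ c) :
    #{ω : ι → X | ∀ l ∉ L, ω l ∈ B ω} ≤ card X ^ #L * c ^ (card ι - #L) := by
  set s : Finset (ι → X) := {ω | ∀ l ∉ L, ω l ∈ B ω}
  let restrict : (ι → X) → (L → X) := fun ω i => ω i
  have hfiber (a : L → X) : #{ω ∈ s | restrict ω = a} ≤ c ^ (card ι - #L) := by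
    rcases eq_empty_or_nonempty {ω ∈ s | restrict ω = a} with hempty | ⟨ω₀, hω₀⟩
    · simp [hempty]
    have hagree {ω} (hω : ω ∈ {ω ∈ s | restrict ω = a}) (l : ι) (hl : l ∈ L) : ω l = ω₀ l :=
      congrFun ((mem_filter.1 hω).2.trans (mem_filter.1 hω₀).2.symm) ⟨l, hl⟩
    calc #{ω ∈ s | restrict ω = a}
        ≤ #(piFinset fun _ : {l // l ∉ L} => B ω₀) := by
          refine card_le_card_of_injOn (fun ω i => ω i) (fun ω hω => ?_)
            fun ω hω ω' hω' h => ?_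
          · have hmem := (mem_filter.1 (mem_filter.1 hω).1).2
            simp only [mem_coe, mem_piFinset]
            intro i
            rw [← hB fun l hl => hagree hω l hl]
            exact hmem i i.2
          · funext l
            by_cases hl : l ∈ L
            · rw [hagree hω l hl, hagree hω' l hl]
            · exact congrFun h ⟨l, hl⟩
      _ ≤ c ^ (card ι - #L) := by
          rw [card_piFinset, prod_const, card_univ, card_subtype_compl, card_coe]
          exact Nat.pow_le_pow_left (hc ω₀) _
  calc #s = ∑ a : L → X, #{ω ∈ s | restrict ω = a} :=
        card_eq_sum_card_fiberwise fun _ _ => mem_univ _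
    _ ≤ ∑ _a : L → X, c ^ (card ι - #L) := sum_le_sum fun a _ => hfiber a
    _ = card X ^ #L * c ^ (card ι - #L) := by simp [card_univ]

theorem exists_forall_not_of_card_lt {Ω I : Type*} [Fintype Ω] [Nonempty Ω] [Fintype I]
    (E : I → Ω → Prop) [∀ i, DecidablePred (E i)] {a : ℕ}
    (hE : ∀ i, a * #{ω | E i ω} ≤ card Ω) (hI : card I < a) : ∃ ω, ∀ i, ¬E i ω := by
  classical
  by_contra! h
  have hcover : (univ : Finset Ω) ⊆ univ.biUnion fun i => {ω | E i ω} := fun ω _ => by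
    obtain ⟨i, hi⟩ := h ω
    simp only [mem_biUnion, mem_univ, mem_filter, true_and]
    exact ⟨i, hi⟩
  have : a * card Ω ≤ card I * card Ω :=
    calc a * card Ω ≤ a * ∑ i, #{ω | E i ω} :=
          Nat.mul_le_mul_left a ((card_le_card hcover).trans card_biUnion_le)
      _ = ∑ i, a * #{ω | E i ω} := mul_sum _ _ _
      _ ≤ card I * card Ω := by
          rw [← smul_eq_mul, ← card_univ]; exact sum_le_card_nsmul _ _ _ fun i _ => hE i
  exact absurd (Nat.le_of_mul_le_mul_right this card_pos) (not_le.2 hI)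

end Counting

section Encoding

variable {n r k : ℕ}

lemma castAdd_ne_natAdd (u : Fin n) (j : Fin r) : Fin.castAdd r u ≠ Fin.natAdd n j := by
  simp only [ne_eq, Fin.ext_iff, Fin.val_castAdd, Fin.val_natAdd]
  omega

def parityEncode (P : Fin r → Finset (Fin n)) :
    (Fin n → ZMod 2) →ₗ[ZMod 2] (Fin (n + r) → ZMod 2) :=
  LinearMap.pi <| Fin.addCases LinearMap.proj fun j => ∑ u ∈ P j, LinearMap.proj u

@[simp]
lemma parityEncode_castAdd (P : Fin r → Finset (Fin n)) (x : Fin n → ZMod 2) (u : Fin n) :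
    parityEncode P x (Fin.castAdd r u) = x u := by
  simp [parityEncode]

@[simp]
lemma parityEncode_natAdd (P : Fin r → Finset (Fin n)) (x : Fin n → ZMod 2) (j : Fin r) :
    parityEncode P x (Fin.natAdd n j) = ∑ u ∈ P j, x u := by
  simp [parityEncode]

lemma parityEncode_injective (P : Fin r → Finset (Fin n)) :
    Injective (parityEncode P) := fun x y hxy =>
  funext fun u => by simpa using congrFun hxy (Fin.castAdd r u)

lemma sum_insert_parityEncode (P : Fin r → Finset (Fin n)) (x : Fin n → ZMod 2) {u : Fin n}
    {j : Fin r} (hu : u ∈ P j) :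
    x u = ∑ p ∈ insert (Fin.natAdd n j) (((P j).erase u).map (Fin.castAddEmb r)),
      parityEncode P x p := by
  rw [sum_insert, sum_map, parityEncode_natAdd, ← add_sum_erase _ _ hu]
  · simp [CharTwo.add_cancel_right]
  · simp only [mem_map, Fin.coe_castAddEmb, not_exists, not_and]
    exact fun w _ => castAdd_ne_natAdd w j

theorem isBatchCode_parityEncode (P : Fin r → Finset (Fin n))
    (h : ∀ v : Fin k → Fin n, ∃ p : Fin k → Fin r, Injective p ∧
      (∀ t, v t ∈ P (p t)) ∧ Pairwise (Disjoint on fun t => (P (p t)).erase (v t))) :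
    IsBatchCode (n + r) n k (parityEncode P) := by
  refine ⟨parityEncode_injective P, fun v => ?_⟩
  obtain ⟨p, hp, hmem, hdisj⟩ := h v
  refine ⟨fun t => insert (Fin.natAdd n (p t)) (((P (p t)).erase (v t)).map (Fin.castAddEmb r)),
    fun t₁ t₂ hne => ?_, fun x t => sum_insert_parityEncode P x (hmem t)⟩
  simp only [disjoint_insert_left, disjoint_insert_right, disjoint_map, mem_insert, mem_map]
  refine ⟨?_, fun ⟨u, _, hu⟩ => castAdd_ne_natAdd u _ hu, hdisj hne⟩
  rintro (heq | ⟨u, -, hu⟩)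
  · exact hne (hp ((Fin.natAdd_inj n).1 heq)).symm
  · exact castAdd_ne_natAdd u _ hu

end Encoding

section Blocks

variable {α β : Type*} [Fintype α] [DecidableEq β]

def block (f : α → β) (u : α) : Finset α := {w | f w = f u}

lemma mem_block_self (f : α → β) (u : α) : u ∈ block f u := by
  simp [block]

variable [DecidableEq α] [Fintype β]

lemma card_filter_apply_eq_mul_card_le {u w : α} (h : w ≠ u) :
    #{f : α → β | f w = f u} * card β ≤ card β ^ card α := by
  calc #{f : α → β | f w = f u} * card β
        = #(({f : α → β | f w = f u} : Finset (α → β)) ×ˢ (univ : Finset β)) := by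
        rw [card_product, card_univ]
    _ ≤ #(univ : Finset (α → β)) := by
        refine card_le_card_of_injOn (fun p => update p.1 w p.2) (by simp) ?_
        rintro ⟨f, b⟩ hf ⟨g, c⟩ hg hfg
        simp only [coe_product, Set.mem_prod, mem_coe, mem_filter, mem_univ, true_and] at hf hg
        have hbc : b = c := by simpa using congrFun hfg w
        subst hbc
        refine Prod.ext (funext fun x => ?_) rfl
        by_cases hx : x = w
        · subst hx
          simpa [hf, hg, h.symm] using congrFun hfg u
        · simpa [hx] using congrFun hfg x
    _ = card β ^ card α := by rw [card_univ, Fintype.card_fun]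

lemma sum_card_erase_block_mul_le (u : α) :
    (∑ f : α → β, #((block f u).erase u)) * card β ≤ (card α - 1) * card β ^ card α := by
  have hsum : ∑ f : α → β, #((block f u).erase u)
      = ∑ w ∈ univ.erase u, #{f : α → β | f w = f u} := by
    calc ∑ f : α → β, #((block f u).erase u)
        = ∑ f : α → β, #((univ.erase u).bipartiteAbove (fun f w => f w = f u) f) := by
          refine sum_congr rfl fun f _ => congrArg card ?_
          ext w
          simp [block, bipartiteAbove, and_comm]
      _ = ∑ w ∈ univ.erase u, #{f : α → β | f w = f u} :=
          sum_card_bipartiteAbove_eq_sum_card_bipartiteBelow _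
  rw [hsum, sum_mul, ← card_univ (α := α), ← card_erase_of_mem (mem_univ u), ← smul_eq_mul]
  exact sum_le_card_nsmul _ _ _ fun w hw => card_filter_apply_eq_mul_card_le (ne_of_mem_erase hw)

variable [Nonempty β] {S : ℕ}

lemma four_mul_card_filter_lt_card_block_le (hS : 0 < S) (h : 4 * (card α - 1) ≤ S * card β)
    (u : α) : 4 * #{f : α → β | S < #(block f u)} ≤ card β ^ card α := by
  have hmarkov : S * #{f : α → β | S < #(block f u)} ≤ ∑ f : α → β, #((block f u).erase u) := by
    calc S * #{f : α → β | S < #(block f u)}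
        ≤ ∑ f ∈ ({f : α → β | S < #(block f u)} : Finset _), #((block f u).erase u) := by
          rw [mul_comm, ← smul_eq_mul]
          refine card_nsmul_le_sum _ _ _ fun f hf => ?_
          rw [card_erase_of_mem (mem_block_self f u)]
          have := (mem_filter.1 hf).2
          omega
      _ ≤ _ := sum_le_sum_of_subset (subset_univ _)
  have hβ : 0 < S * card β := Nat.mul_pos hS card_pos
  refine Nat.le_of_mul_le_mul_right ?_ hβ
  calc 4 * #{f : α → β | S < #(block f u)} * (S * card β)
      = 4 * (S * #{f : α → β | S < #(block f u)}) * card β := by ring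
    _ ≤ 4 * (∑ f : α → β, #((block f u).erase u)) * card β := by gcongr
    _ ≤ 4 * ((card α - 1) * card β ^ card α) := by
        rw [mul_assoc]; exact Nat.mul_le_mul_left 4 (sum_card_erase_block_mul_le u)
    _ = 4 * (card α - 1) * card β ^ card α := by ring
    _ ≤ S * card β * card β ^ card α := Nat.mul_le_mul_right _ h
    _ = card β ^ card α * (S * card β) := by ring

lemma four_mul_card_filter_not_disjoint_le {F : Finset α} (h : 4 * #F ≤ card β) (u : α) :
    4 * #{f : α → β | ¬Disjoint ((block f u).erase u) F} ≤ card β ^ card α := by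
  have hsub : ({f : α → β | ¬Disjoint ((block f u).erase u) F} : Finset _)
      ⊆ (F.erase u).biUnion fun w => {f : α → β | f w = f u} := by
    intro f hf
    obtain ⟨w, hw, hwF⟩ := not_disjoint_iff.1 (mem_filter.1 hf).2
    obtain ⟨hwu, hw⟩ := mem_erase.1 hw
    simp only [mem_biUnion, mem_erase, mem_filter, mem_univ, true_and]
    exact ⟨w, ⟨hwu, hwF⟩, by simpa [block] using hw⟩
  have hunion : #{f : α → β | ¬Disjoint ((block f u).erase u) F} * card β
      ≤ #F * card β ^ card α := by
    calc _ ≤ (∑ w ∈ F.erase u, #{f : α → β | f w = f u}) * card β := by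
          gcongr
          exact (card_le_card hsub).trans card_biUnion_le
      _ ≤ #(F.erase u) * card β ^ card α := by
          rw [sum_mul, ← smul_eq_mul]
          exact sum_le_card_nsmul _ _ _ fun w hw =>
            card_filter_apply_eq_mul_card_le (ne_of_mem_erase hw)
      _ ≤ #F * card β ^ card α := Nat.mul_le_mul_right _ card_erase_le
  refine Nat.le_of_mul_le_mul_right ?_ (card_pos (α := β))
  calc _ = 4 * (#{f : α → β | ¬Disjoint ((block f u).erase u) F} * card β) := by ring
    _ ≤ 4 * (#F * card β ^ card α) := by gcongr
    _ = 4 * #F * card β ^ card α := by ring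
    _ ≤ card β * card β ^ card α := Nat.mul_le_mul_right _ h
    _ = card β ^ card α * card β := by ring

def Serves (S : ℕ) (F : Finset α) (u : α) (f : α → β) : Prop :=
  #(block f u) ≤ S ∧ Disjoint ((block f u).erase u) F

instance (S : ℕ) (F : Finset α) (u : α) : DecidablePred (Serves (β := β) S F u) :=
  fun _ => inferInstanceAs (Decidable (_ ∧ _))

lemma two_mul_card_filter_not_serves_le (hS : 0 < S) (hα : 4 * (card α - 1) ≤ S * card β)
    {F : Finset α} (hF : 4 * #F ≤ card β) (u : α) :
    2 * #{f : α → β | ¬Serves S F u f} ≤ card β ^ card α := by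
  have hsub : ({f : α → β | ¬Serves S F u f} : Finset _) ⊆
      ({f : α → β | S < #(block f u)} : Finset _) ∪
        ({f : α → β | ¬Disjoint ((block f u).erase u) F} : Finset _) := by
    intro f
    simp only [Serves, not_and_or, not_le, mem_filter, mem_union, mem_univ, true_and, imp_self]
  have := (card_le_card hsub).trans (card_union_le _ _)
  have := four_mul_card_filter_lt_card_block_le hS hα u
  have := four_mul_card_filter_not_disjoint_le (β := β) hF u
  omega

end Blocks

section Layers

variable {ι α β : Type*} [Fintype α] [DecidableEq α] [DecidableEq β] {k S : ℕ}

def prefixLayers [DecidableEq ι] (ℓ : Fin k → ι) (t : Fin k) : Finset ι := (Iio t).image ℓ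

def prefixUnion (ω : ι → α → β) (v : Fin k → α) (ℓ : Fin k → ι) (t : Fin k) : Finset α :=
  (Iio t).biUnion fun j => block (ω (ℓ j)) (v j)

lemma prefixLayers_congr [DecidableEq ι] {ℓ ℓ' : Fin k → ι} {t : Fin k} (h : ∀ j < t, ℓ j = ℓ' j) :
    prefixLayers ℓ t = prefixLayers ℓ' t :=
  image_congr fun j hj => h j (mem_Iio.1 hj)

lemma prefixUnion_congr {ω ω' : ι → α → β} {v : Fin k → α} {ℓ ℓ' : Fin k → ι} {t : Fin k}
    (h : ∀ j < t, ω (ℓ j) = ω' (ℓ' j)) : prefixUnion ω v ℓ t = prefixUnion ω' v ℓ' t :=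
  biUnion_congr rfl fun j hj => by rw [h j (mem_Iio.1 hj)]

lemma card_prefixUnion_le {ω : ι → α → β} {v : Fin k → α} {ℓ : Fin k → ι} {t : Fin k}
    (h : ∀ j < t, #(block (ω (ℓ j)) (v j)) ≤ S) : #(prefixUnion ω v ℓ t) ≤ k * S :=
  calc #(prefixUnion ω v ℓ t) ≤ #(Iio t) * S :=
        card_biUnion_le.trans (sum_le_card_nsmul _ _ _ fun j hj => h j (mem_Iio.1 hj))
    _ ≤ k * S := Nat.mul_le_mul_right _ (by simp [t.2.le])

lemma injective_of_forall_notMem_prefixLayers [DecidableEq ι] {ℓ : Fin k → ι}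
    (h : ∀ t, ℓ t ∉ prefixLayers ℓ t) : Injective ℓ := by
  intro a b hab
  by_contra hne
  rcases lt_or_gt_of_ne hne with hlt | hlt
  · exact h b (mem_image.2 ⟨a, mem_Iio.2 hlt, hab⟩)
  · exact h a (mem_image.2 ⟨b, mem_Iio.2 hlt, hab.symm⟩)

lemma pairwise_disjoint_erase_block {ω : ι → α → β} {v : Fin k → α} {ℓ : Fin k → ι}
    (h : ∀ t, Disjoint ((block (ω (ℓ t)) (v t)).erase (v t)) (prefixUnion ω v ℓ t)) :
    Pairwise (Disjoint on fun t => (block (ω (ℓ t)) (v t)).erase (v t)) := by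
  refine (pairwise_disjoint_on _).2 fun j t hjt => Disjoint.symm ((h t).mono_right ?_)
  exact (erase_subset _ _).trans
    (subset_biUnion_of_mem (fun j => block (ω (ℓ j)) (v j)) (mem_Iio.2 hjt))

/-- The bad event for the greedy choice of layers `ℓ` serving the request `v`. -/
def Stuck [DecidableEq ι] (S : ℕ) (v : Fin k → α) (ℓ : Fin k → ι) (t : Fin k) (ω : ι → α → β) :
    Prop :=
  (∀ j < t, #(block (ω (ℓ j)) (v j)) ≤ S) ∧
    ∀ l ∉ prefixLayers ℓ t, ¬Serves S (prefixUnion ω v ℓ t) (v t) (ω l)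

theorem exists_forall_serves_of_forall_not_stuck [DecidableEq ι] [Nonempty ι] {ω : ι → α → β}
    {v : Fin k → α} (h : ∀ ℓ t, ¬Stuck S v ℓ t ω) :
    ∃ ℓ : Fin k → ι, ∀ t,
      ℓ t ∉ prefixLayers ℓ t ∧ Serves S (prefixUnion ω v ℓ t) (v t) (ω (ℓ t)) := by
  let Step (ℓ : Fin k → ι) (t : Fin k) : Prop :=
    ℓ t ∉ prefixLayers ℓ t ∧ Serves S (prefixUnion ω v ℓ t) (v t) (ω (ℓ t))
  suffices ∀ c ≤ k, ∃ ℓ : Fin k → ι, ∀ t : Fin k, (t : ℕ) < c → Step ℓ t from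
    (this k le_rfl).imp fun ℓ hℓ t => hℓ t t.2
  intro c
  induction c with
  | zero => exact fun _ => ⟨fun _ => Classical.arbitrary ι, by simp⟩
  | succ c ih =>
    intro hc
    obtain ⟨ℓ, hℓ⟩ := ih (by omega)
    let t : Fin k := ⟨c, hc⟩
    have hnot := h ℓ t
    simp only [Stuck, not_and, not_forall, not_not] at hnot
    obtain ⟨l, hlL, hl⟩ := hnot fun j hj => (hℓ j hj).2.1
    have hpre : ∀ j < t, update ℓ t l j = ℓ j := fun j hj => update_of_ne hj.ne _ _
    refine ⟨update ℓ t l, fun t' ht' => ?_⟩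
    rcases Nat.lt_succ_iff_lt_or_eq.1 ht' with hlt | heq
    · have hpre' : ∀ j < t', update ℓ t l j = ℓ j := fun j hj => hpre j (hj.trans hlt)
      simp only [Step, prefixLayers_congr hpre',
        prefixUnion_congr fun j hj => congrArg ω (hpre' j hj), hpre t' hlt]
      exact hℓ t' hlt
    · obtain rfl : t' = t := Fin.ext heq
      simp only [Step, update_self, prefixLayers_congr hpre,
        prefixUnion_congr fun j hj => congrArg ω (hpre j hj)]
      exact ⟨hlL, hl⟩

instance [Fintype ι] [DecidableEq ι] (S : ℕ) (v : Fin k → α) (ℓ : Fin k → ι) (t : Fin k) :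
    DecidablePred (Stuck (β := β) S v ℓ t) :=
  fun _ => inferInstanceAs (Decidable (_ ∧ _))

variable [Fintype ι] [DecidableEq ι] [Fintype β] [Nonempty β]

/-- Given the layers in `prefixLayers ℓ t`, each of the other layers independently fails to
serve `v t` with probability at most `1 / 2`. -/
theorem two_pow_mul_card_stuck_le (hS : 0 < S) (hα : 4 * (card α - 1) ≤ S * card β)
    (hβ : 4 * (k * S) ≤ card β) (v : Fin k → α) (ℓ : Fin k → ι) (t : Fin k) :
    2 ^ (card ι - k) * #{ω : ι → α → β | Stuck S v ℓ t ω} ≤ card (α → β) ^ card ι := by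
  set M := card (α → β)
  set L := prefixLayers ℓ t
  let B : (ι → α → β) → Finset (α → β) := fun ω =>
    if ∀ j < t, #(block (ω (ℓ j)) (v j)) ≤ S then
      ({f | ¬Serves S (prefixUnion ω v ℓ t) (v t) f} : Finset (α → β))
    else ∅
  have hB : DependsOn B L := by
    intro ω ω' h
    have h' : ∀ j < t, ω (ℓ j) = ω' (ℓ j) := fun j hj => h _ (mem_image_of_mem ℓ (mem_Iio.2 hj))
    have hsmall : (∀ j < t, #(block (ω (ℓ j)) (v j)) ≤ S) ↔
        ∀ j < t, #(block (ω' (ℓ j)) (v j)) ≤ S :=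
      forall₂_congr fun j hj => by rw [h' j hj]
    simp only [B, prefixUnion_congr h', hsmall]
  have hc (ω : ι → α → β) : #(B ω) ≤ M / 2 := by
    simp only [B]
    split_ifs with hsmall
    · have := two_mul_card_filter_not_serves_le hS hα
        ((Nat.mul_le_mul_left 4 (card_prefixUnion_le hsmall)).trans hβ) (v t)
      rw [Nat.le_div_iff_mul_le two_pos, mul_comm]
      exact this.trans_eq Fintype.card_fun.symm
    · simp
  have hsub : ({ω : ι → α → β | Stuck S v ℓ t ω} : Finset _) ⊆
      ({ω : ι → α → β | ∀ l ∉ L, ω l ∈ B ω} : Finset _) := by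
    intro ω hω
    obtain ⟨hsmall, hstuck⟩ := (mem_filter.1 hω).2
    simp only [mem_filter, mem_univ, true_and, B, if_pos hsmall]
    exact hstuck
  have hLk : #L ≤ k := card_image_le.trans (by simp [t.2.le])
  have hLι : #L ≤ card ι := card_le_univ L
  calc 2 ^ (card ι - k) * #{ω : ι → α → β | Stuck S v ℓ t ω}
      ≤ 2 ^ (card ι - #L) * (M ^ #L * (M / 2) ^ (card ι - #L)) :=
        Nat.mul_le_mul (Nat.pow_le_pow_right two_pos (by omega))
          ((card_le_card hsub).trans (card_filter_forall_notMem_mem_le L hB hc))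
    _ = M ^ #L * (2 * (M / 2)) ^ (card ι - #L) := by rw [mul_pow]; ring
    _ ≤ M ^ #L * M ^ (card ι - #L) := by gcongr; exact Nat.mul_div_le M 2
    _ = M ^ card ι := by rw [← pow_add, Nat.add_sub_cancel' hLι]

theorem exists_forall_not_stuck (hS : 0 < S) (hα : 4 * (card α - 1) ≤ S * card β)
    (hβ : 4 * (k * S) ≤ card β) (hcount : card α ^ k * (k * card ι ^ k) < 2 ^ (card ι - k)) :
    ∃ ω : ι → α → β, ∀ (v : Fin k → α) ℓ t, ¬Stuck S v ℓ t ω := by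
  obtain ⟨ω, hω⟩ := exists_forall_not_of_card_lt (a := 2 ^ (card ι - k))
    (fun i : (Fin k → α) × Fin k × (Fin k → ι) => Stuck S i.1 i.2.2 i.2.1)
    (fun i => (two_pow_mul_card_stuck_le hS hα hβ _ _ _).trans_eq Fintype.card_fun.symm)
    (by simpa using hcount)
  exact ⟨ω, fun v ℓ t => hω (v, t, ℓ)⟩

end Layers

section Code

variable {n m d k S : ℕ}

def layerChecks (ω : Fin d → Fin n → Fin m) (j : Fin (d * m)) : Finset (Fin n) :=
  {u | ω (finProdFinEquiv.symm j).1 u = (finProdFinEquiv.symm j).2}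

lemma layerChecks_finProdFinEquiv (ω : Fin d → Fin n → Fin m) (l : Fin d) (u : Fin n) :
    layerChecks ω (finProdFinEquiv (l, ω l u)) = block (ω l) u := by
  simp [layerChecks, block]

theorem isBatchCode_of_forall_not_stuck [NeZero d] {ω : Fin d → Fin n → Fin m}
    (h : ∀ (v : Fin k → Fin n) ℓ t, ¬Stuck S v ℓ t ω) :
    IsBatchCode (n + d * m) n k (parityEncode (layerChecks ω)) := by
  refine isBatchCode_parityEncode _ fun v => ?_
  obtain ⟨ℓ, hℓ⟩ := exists_forall_serves_of_forall_not_stuck (h v)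
  refine ⟨fun t => finProdFinEquiv (ℓ t, ω (ℓ t) (v t)), ?_, fun t => ?_, ?_⟩
  · intro t₁ t₂ heq
    exact injective_of_forall_notMem_prefixLayers (fun t => (hℓ t).1)
      (Prod.ext_iff.1 (finProdFinEquiv.injective heq)).1
  · rw [layerChecks_finProdFinEquiv]
    exact mem_block_self _ _
  · simp only [layerChecks_finProdFinEquiv]
    exact pairwise_disjoint_erase_block fun t => (hℓ t).2.2

theorem exists_isBatchCode_of_card_lt (hk : 0 < k) (hkd : k ≤ d) (hS : 0 < S)
    (hn : 4 * (n - 1) ≤ S * m) (hm : 4 * (k * S) ≤ m)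
    (hcount : n ^ k * (k * d ^ k) < 2 ^ (d - k)) :
    ∃ enc : (Fin n → ZMod 2) →ₗ[ZMod 2] (Fin (n + d * m) → ZMod 2),
      IsBatchCode (n + d * m) n k enc := by
  have : NeZero d := ⟨by omega⟩
  have : NeZero m := ⟨by nlinarith⟩
  obtain ⟨ω, hω⟩ := exists_forall_not_stuck (ι := Fin d) (α := Fin n) (β := Fin m) hS
    (by simpa using hn) (by simpa using hm) (by simpa using hcount)
  exact ⟨_, isBatchCode_of_forall_not_stuck hω⟩

end Code

section Parameters

open Real Filter

variable {n k : ℕ}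

lemma lt_mul_sqrt_div_add_one_sq (n : ℕ) (hk : 0 < k) : n < k * (Nat.sqrt (n / k) + 1) ^ 2 :=
  (Nat.lt_mul_div_succ n hk).trans_le
    (Nat.mul_le_mul_left k (Nat.lt_succ_sqrt' (n / k)))

/-- The union bound over stuck events succeeds with `d = 10 k (⌊log₂ n⌋ + 1)` layers. -/
lemma pow_mul_mul_pow_lt (hk : 0 < k) (hkn : k ≤ n) (hd : 10 * k * (Nat.log 2 n + 1) ≤ n) :
    n ^ k * (k * (10 * k * (Nat.log 2 n + 1)) ^ k) < 2 ^ (10 * k * (Nat.log 2 n + 1) - k) := by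
  set a := Nat.log 2 n + 1
  have ha : 1 ≤ a := Nat.succ_pos _
  have hexp : a * (2 * k + 1) + k ≤ 10 * k * a := by nlinarith
  calc n ^ k * (k * (10 * k * a) ^ k) ≤ n ^ k * (n * n ^ k) := by gcongr
    _ = n ^ (2 * k + 1) := by ring
    _ < (2 ^ a) ^ (2 * k + 1) :=
        Nat.pow_lt_pow_left (Nat.lt_pow_succ_log_self one_lt_two n) (by omega)
    _ = 2 ^ (a * (2 * k + 1)) := (pow_mul _ _ _).symm
    _ ≤ 2 ^ (10 * k * a - k) := Nat.pow_le_pow_right two_pos (by omega)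

lemma one_le_log_of_three_le (hn : 3 ≤ n) : 1 ≤ log n := by
  rw [le_log_iff_exp_le (by positivity)]
  have : (3 : ℝ) ≤ n := by exact_mod_cast hn
  linarith [exp_one_lt_d9]

lemma natLog_two_add_one_le (hn : 3 ≤ n) : (Nat.log 2 n : ℝ) + 1 ≤ 3 * log n := by
  have hlog : (Nat.log 2 n : ℝ) * log 2 ≤ log n := by
    rw [← log_pow]
    exact log_le_log (by positivity) (by exact_mod_cast Nat.pow_log_le_self 2 (by omega))
  nlinarith [log_two_gt_d9, one_le_log_of_three_le hn, (Nat.log 2 n).cast_nonneg (α := ℝ)]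

lemma mul_sqrt_div_add_one_le (hk : 0 < k) (hkn : k ≤ n) :
    (k : ℝ) * (Nat.sqrt (n / k) + 1) ≤ 2 * √(k * n) := by
  have hsq : k * Nat.sqrt (n / k) ^ 2 ≤ n :=
    (Nat.mul_le_mul_left k (Nat.sqrt_le' _)).trans (Nat.mul_div_le n k)
  have h1 : (k : ℝ) * Nat.sqrt (n / k) ≤ √(k * n) := by
    rw [le_sqrt (by positivity) (by positivity)]
    calc ((k : ℝ) * Nat.sqrt (n / k)) ^ 2 = k * (k * Nat.sqrt (n / k) ^ 2 : ℕ) := by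
          push_cast; ring
      _ ≤ k * n := by gcongr
  have h2 : (k : ℝ) ≤ √(k * n) := by
    rw [le_sqrt (by positivity) (by positivity), sq]
    gcongr
  linarith

lemma redundancy_le_rpow_mul_sqrt_mul_log (hk : 0 < k) (hn : 3 ≤ n) (hkn : k ≤ n) :
    ((10 * k * (Nat.log 2 n + 1) * (4 * k * (Nat.sqrt (n / k) + 1)) : ℕ) : ℝ)
      ≤ 240 * (k : ℝ) ^ ((3 : ℝ) / 2) * √n * log n := by
  have hk0 : (0 : ℝ) < k := by exact_mod_cast hk
  have hk32 : (k : ℝ) ^ ((3 : ℝ) / 2) = k * √k := by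
    rw [show (3 : ℝ) / 2 = 1 + 1 / 2 by norm_num, rpow_add hk0, rpow_one, sqrt_eq_rpow]
  calc ((10 * k * (Nat.log 2 n + 1) * (4 * k * (Nat.sqrt (n / k) + 1)) : ℕ) : ℝ)
      = 40 * k * ((Nat.log 2 n : ℝ) + 1) * (k * (Nat.sqrt (n / k) + 1)) := by push_cast; ring
    _ ≤ 40 * k * (3 * log n) * (2 * √(k * n)) := by
        gcongr 40 * k * ?_ * ?_
        · exact natLog_two_add_one_le hn
        · exact mul_sqrt_div_add_one_le hk hkn
    _ = 240 * (k : ℝ) ^ ((3 : ℝ) / 2) * √n * log n := by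
        rw [hk32, sqrt_mul hk0.le]; ring

lemma eventually_mul_log_le {k : ℕ → ℕ}
    (hk : Tendsto (fun n : ℕ => (k n : ℝ) * log n / (n : ℝ) ^ ((1 : ℝ) / 3)) atTop (nhds 0)) :
    ∀ᶠ n : ℕ in atTop, 30 * k n * log n ≤ n := by
  have hsmall := hk.eventually_lt_const one_pos
  have hlarge : ∀ᶠ n : ℕ in atTop, 30 ≤ (n : ℝ) ^ ((2 : ℝ) / 3) :=
    ((tendsto_rpow_atTop (by norm_num)).comp tendsto_natCast_atTop_atTop).eventually_ge_atTop 30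
  filter_upwards [hsmall, hlarge, eventually_gt_atTop 0] with n hsmall hlarge hn
  have hn0 : (0 : ℝ) < n := by exact_mod_cast hn
  rw [div_lt_one (by positivity)] at hsmall
  calc 30 * k n * log n = 30 * (k n * log n) := by ring
    _ ≤ (n : ℝ) ^ ((2 : ℝ) / 3) * (n : ℝ) ^ ((1 : ℝ) / 3) := by gcongr
    _ = n := by rw [← rpow_add hn0]; norm_num

theorem exists_isBatchCode_redundancy_le (hk : 0 < k) (hn : 3 ≤ n) (h : 30 * k * log n ≤ n) :
    ∃ r : ℕ, (r : ℝ) ≤ 240 * (k : ℝ) ^ ((3 : ℝ) / 2) * √n * log n ∧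
      ∃ enc : (Fin n → ZMod 2) →ₗ[ZMod 2] (Fin (n + r) → ZMod 2), IsBatchCode (n + r) n k enc := by
  have hlog := one_le_log_of_three_le hn
  have hk1 : (1 : ℝ) ≤ k := by exact_mod_cast hk
  have hkn : k ≤ n := by exact_mod_cast (show (k : ℝ) ≤ n by nlinarith)
  have hd : 10 * k * (Nat.log 2 n + 1) ≤ n := by
    have := natLog_two_add_one_le hn
    exact_mod_cast (show ((10 * k * (Nat.log 2 n + 1) : ℕ) : ℝ) ≤ n by push_cast; nlinarith)
  have hkd : k ≤ 10 * k * (Nat.log 2 n + 1) := by nlinarith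
  have hnS : 4 * (n - 1) ≤ (Nat.sqrt (n / k) + 1) * (4 * k * (Nat.sqrt (n / k) + 1)) := by
    have := lt_mul_sqrt_div_add_one_sq n hk
    have : 4 * (n - 1) ≤ 4 * n := by omega
    nlinarith
  exact ⟨_, redundancy_le_rpow_mul_sqrt_mul_log hk hn hkn,
    exists_isBatchCode_of_card_lt hk hkd (Nat.succ_pos _) hnS (mul_assoc 4 k _).symm.le
      (pow_mul_mul_pow_lt hk hkn hd)⟩

end Parameters

end BatchCode

/-- Random construction of batch codes: if `k(n) log n / n^{1/3} → 0`, then for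
all sufficiently large squares of prime powers `n = q²` there is a binary
primitive `k(n)`-batch code of dimension `n` with redundancy
`O(k(n)^{3/2} √n log n)`. -/
theorem random_construction_of_batch_codes (k : ℕ → ℕ)
    (hk : Filter.Tendsto
      (fun n : ℕ => (k n : ℝ) * Real.log n / (n : ℝ) ^ ((1 : ℝ) / 3))
      Filter.atTop (nhds 0)) :
    ∃ C : ℝ, 0 < C ∧ ∃ n₀ : ℕ, ∀ q n : ℕ, IsPrimePow q → n = q ^ 2 → n₀ ≤ n →
      1 ≤ k n →
      ∃ r : ℕ,
        (r : ℝ) ≤ C * (k n : ℝ) ^ ((3 : ℝ) / 2) * Real.sqrt n * Real.log n ∧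
        ∃ enc : (Fin n → ZMod 2) →ₗ[ZMod 2] (Fin (n + r) → ZMod 2),
          IsBatchCode (n + r) n (k n) enc := by
  obtain ⟨n₀, hn₀⟩ := Filter.eventually_atTop.1
    ((BatchCode.eventually_mul_log_le hk).and (Filter.eventually_ge_atTop 3))
  refine ⟨240, by norm_num, n₀, fun q n _ _ hn hkn => ?_⟩
  obtain ⟨hlog, hn3⟩ := hn₀ n hn
  exact BatchCode.exists_isBatchCode_redundancy_le hkn hn3 hlog
end

section
/- Let q be a prime power, ℓ ≥ 1, L ≥ 1 and m ≥ 1 be integers. If there exists an L-nice collection {V_1,…,V_m} of ℓ-dimensional subspaces of 𝔽_q^{2ℓ+1}, then there exists a binary primitive linear [q^{2ℓ+1} + m·q^{ℓ+1}, q^{2ℓ+1}, ⌊m/L⌋]^B batch code. -/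
/-- An `L`-nice collection of `ℓ`-dimensional subspaces of `F^{2ℓ+1}`:
all subspaces are `ℓ`-dimensional, any two distinct members intersect
trivially, and every coset `v + Vᵢ` with `v ∉ Vᵢ` meets at most `L` members
of the collection. -/
def IsNice (F : Type*) [Field F] (ℓ L : ℕ) {m : ℕ}
    (V : Fin m → Submodule F (Fin (2 * ℓ + 1) → F)) : Prop :=
  (∀ i, Module.finrank F (V i) = ℓ) ∧
  (∀ i j : Fin m, i ≠ j → V i ⊓ V j = ⊥) ∧
  (∀ (i : Fin m) (v : Fin (2 * ℓ + 1) → F), v ∉ V i →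
    Nat.card {j : Fin m // ∃ w ∈ V i, v + w ∈ V j} ≤ L)

/-!
The code stores every bit `x u`, `u ∈ 𝔽_q^{2ℓ+1}`, and, for every `i` and every coset of `Vᵢ`,
the parity of `x` on that coset. The bit `x u` is recovered from the parity of `u + Vᵢ` together
with the stored bits of the other points of that coset. The recovery sets of `u` via `Vᵢ` and of
`u'` via `Vⱼ` can only meet if `j = i` (when `u' ∈ u + Vᵢ`, because `Vᵢ ∩ Vⱼ = 0`) or if the coset
`u - u' + Vᵢ` meets `Vⱼ`; so for fixed `u, i, u'` at most `L` indices `j` clash, and choosing the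
subspaces for the `⌊m/L⌋` requests one after the other never gets stuck.
-/

open Finset Function

def IsBatchCodeOn {α β : Type*} (k : ℕ) (enc : (α → ZMod 2) →ₗ[ZMod 2] (β → ZMod 2)) :
    Prop :=
  Injective enc ∧
  ∀ r : Fin k → α, ∃ R : Fin k → Finset β, Pairwise (Disjoint on R) ∧
    ∀ x t, x (r t) = ∑ p ∈ R t, enc x p

theorem IsBatchCodeOn.isBatchCode {α β : Type*} {k n N : ℕ}
    {enc : (α → ZMod 2) →ₗ[ZMod 2] (β → ZMod 2)} (h : IsBatchCodeOn k enc)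
    (eα : α ≃ Fin n) (eβ : β ≃ Fin N) :
    IsBatchCode N n k
      (LinearMap.funLeft (ZMod 2) (ZMod 2) eβ.symm ∘ₗ enc ∘ₗ
        LinearMap.funLeft (ZMod 2) (ZMod 2) eα) := by
  refine ⟨(LinearMap.funLeft_injective_of_surjective (ZMod 2) (ZMod 2) _ eβ.symm.surjective).comp
    (h.1.comp (LinearMap.funLeft_injective_of_surjective (ZMod 2) (ZMod 2) _ eα.surjective)),
    fun r => ?_⟩
  obtain ⟨R, hdisj, hsum⟩ := h.2 (eα.symm ∘ r)
  refine ⟨fun t => (R t).map eβ.toEmbedding, fun s t hst => (disjoint_map _).2 (hdisj hst),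
    fun x t => ?_⟩
  simpa [comp_def] using hsum (LinearMap.funLeft (ZMod 2) (ZMod 2) eα x) t

theorem exists_pairwise_not_conflict {α β : Type*} [Fintype β] [DecidableEq β]
    (C : α × β → α × β → Prop) [DecidableRel C] (hC : Std.Symm C) {L k : ℕ} (hL : 0 < L)
    (hbound : ∀ p a, #{b | C p (a, b)} ≤ L) (hk : k * L ≤ Fintype.card β) (u : Fin k → α) :
    ∃ i : Fin k → β, Pairwise fun s t => ¬ C (u s, i s) (u t, i t) := by
  induction k with
  | zero => exact ⟨Fin.elim0, fun s => s.elim0⟩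
  | succ k ih =>
    obtain ⟨i, hi⟩ := ih (le_trans (by nlinarith) hk) (Fin.tail u)
    let bad : Finset β := univ.biUnion fun s : Fin k => {b | C (u s.succ, i s) (u 0, b)}
    have hbad : #bad < #(univ : Finset β) := calc
      #bad ≤ ∑ _s : Fin k, L := card_biUnion_le.trans (sum_le_sum fun s _ => hbound _ _)
      _ < (k + 1) * L := by
        simp only [sum_const, card_univ, Fintype.card_fin, smul_eq_mul]
        nlinarith
      _ ≤ #univ := hk
    obtain ⟨b, -, hb⟩ := exists_mem_notMem_of_card_lt_card hbad
    have hb' (s : Fin k) : ¬ C (u s.succ, i s) (u 0, b) := fun h =>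
      hb (mem_biUnion.2 ⟨s, mem_univ _, mem_filter.2 ⟨mem_univ _, h⟩⟩)
    refine ⟨Fin.cons b i, fun s t hst => ?_⟩
    cases s using Fin.cases <;> cases t using Fin.cases
    · exact absurd rfl hst
    · exact fun h => hb' _ (hC.symm _ _ h)
    · exact hb' _
    · exact hi fun h => hst (congrArg Fin.succ h)

section CosetCode

open scoped Classical

variable {R P ι : Type*} [Ring R] [AddCommGroup P] [Module R P] [Fintype P]
  (V : ι → Submodule R P)

noncomputable def cosetCode : (P → ZMod 2) →ₗ[ZMod 2] (P ⊕ (Σ i, P ⧸ V i) → ZMod 2) where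
  toFun x := Sum.elim x fun c => ∑ w with Submodule.Quotient.mk w = c.2, x w
  map_add' x y := by ext (_ | _) <;> simp [sum_add_distrib]
  map_smul' a x := by ext (_ | _) <;> simp [mul_sum]

@[simp]
theorem cosetCode_inl (x : P → ZMod 2) (u : P) : cosetCode V x (.inl u) = x u := rfl

@[simp]
theorem cosetCode_inr (x : P → ZMod 2) (i : ι) (c : P ⧸ V i) :
    cosetCode V x (.inr ⟨i, c⟩) = ∑ w with Submodule.Quotient.mk w = c, x w := rfl

noncomputable def recoverySet (u : P) (i : ι) : Finset (P ⊕ Σ i, P ⧸ V i) :=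
  insert (.inr ⟨i, Submodule.Quotient.mk u⟩)
    (({w | w - u ∈ V i ∧ w ≠ u} : Finset P).map Embedding.inl)

theorem sum_recoverySet (x : P → ZMod 2) (u : P) (i : ι) :
    ∑ p ∈ recoverySet V u i, cosetCode V x p = x u := by
  have hcoset : ({w | Submodule.Quotient.mk (p := V i) w = Submodule.Quotient.mk u} : Finset P) =
      insert u ({w | w - u ∈ V i ∧ w ≠ u} : Finset P) := by
    ext w
    by_cases hw : w = u <;> simp [hw, Submodule.Quotient.eq]
  rw [recoverySet, sum_insert (by simp), sum_map, cosetCode_inr, hcoset, sum_insert (by simp)]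
  simp only [Embedding.inl_apply, cosetCode_inl]
  rw [add_assoc, CharTwo.add_self_eq_zero, add_zero]

theorem exists_of_not_disjoint_recoverySet {u u' : P} {i j : ι}
    (h : ¬ Disjoint (recoverySet V u i) (recoverySet V u' j)) :
    (i = j ∧ u - u' ∈ V i) ∨ ∃ w, w - u ∈ V i ∧ w - u' ∈ V j ∧ w ≠ u' := by
  obtain ⟨p, hp, hp'⟩ := not_disjoint_iff.1 h
  simp only [recoverySet, mem_insert, mem_map, mem_filter, mem_univ, true_and,
    Embedding.inl_apply] at hp hp'
  rcases hp with rfl | ⟨w, hw, rfl⟩ <;> rcases hp' with hp' | ⟨w', hw', hp'⟩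
  · obtain ⟨rfl, hc⟩ := Sigma.mk.inj_iff.1 (Sum.inr_injective hp')
    exact .inl ⟨rfl, (Submodule.Quotient.eq _).1 (eq_of_heq hc)⟩
  · simp at hp'
  · simp at hp'
  · obtain rfl := Sum.inl_injective hp'
    exact .inr ⟨w', hw.1, hw'.1, hw'.2⟩

theorem card_not_disjoint_recoverySet_le [Fintype ι] {L : ℕ} (hL : 0 < L)
    (hdisj : Pairwise (Disjoint on V))
    (hcoset : ∀ i v, v ∉ V i → Nat.card {j // ∃ w ∈ V i, v + w ∈ V j} ≤ L)
    (u u' : P) (i : ι) :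
    #{j | ¬ Disjoint (recoverySet V u i) (recoverySet V u' j)} ≤ L := by
  by_cases hu : u - u' ∈ V i
  · refine (card_le_card fun j hj => ?_).trans ((card_singleton i).trans_le hL)
    rcases exists_of_not_disjoint_recoverySet V (mem_filter.1 hj).2 with
      ⟨rfl, -⟩ | ⟨w, hw, hw', hne⟩
    · exact mem_singleton_self _
    refine mem_singleton.2 (by_contra fun hji => ?_)
    have hw'i : w - u' ∈ V i := by simpa using (V i).add_mem hw hu
    exact hne (sub_eq_zero.1 (Submodule.disjoint_def.1 (hdisj (Ne.symm hji)) _ hw'i hw'))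
  · calc #{j | ¬ Disjoint (recoverySet V u i) (recoverySet V u' j)}
        ≤ #{j | ∃ w ∈ V i, (u - u') + w ∈ V j} := by
          refine card_le_card fun j hj => mem_filter.2 ⟨mem_univ _, ?_⟩
          rcases exists_of_not_disjoint_recoverySet V (mem_filter.1 hj).2 with
            ⟨-, h⟩ | ⟨w, hw, hw', -⟩
          · exact absurd h hu
          · exact ⟨w - u, hw, by rwa [sub_add_sub_cancel']⟩
      _ = Nat.card {j // ∃ w ∈ V i, (u - u') + w ∈ V j} := by
          rw [Nat.card_eq_fintype_card, Fintype.card_subtype]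
      _ ≤ L := hcoset i _ hu

theorem isBatchCodeOn_cosetCode [Fintype ι] {L k : ℕ} (hL : 0 < L)
    (hdisj : Pairwise (Disjoint on V))
    (hcoset : ∀ i v, v ∉ V i → Nat.card {j // ∃ w ∈ V i, v + w ∈ V j} ≤ L)
    (hk : k * L ≤ Fintype.card ι) : IsBatchCodeOn k (cosetCode V) := by
  refine ⟨fun x y h => funext fun u => by simpa using congrFun h (.inl u), fun r => ?_⟩
  obtain ⟨i, hi⟩ := exists_pairwise_not_conflict
    (fun p p' : P × ι => ¬ Disjoint (recoverySet V p.1 p.2) (recoverySet V p'.1 p'.2))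
    ⟨fun _ _ h h' => h h'.symm⟩ hL
    (fun _ _ => card_not_disjoint_recoverySet_le V hL hdisj hcoset _ _ _) hk r
  exact ⟨fun t => recoverySet V (r t) (i t), fun s t hst => not_not.1 (hi hst),
    fun x t => (sum_recoverySet V x _ _).symm⟩

end CosetCode

theorem natCard_quotient_eq_pow {K M : Type*} [Field K] [AddCommGroup M] [Module K M]
    [Module.Finite K M] (W : Submodule K M) :
    Nat.card (M ⧸ W) = Nat.card K ^ (Module.finrank K M - Module.finrank K W) := by
  rw [Module.natCard_eq_pow_finrank (K := K), Submodule.finrank_quotient]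

theorem batch_code_of_nice_collection_general (q ℓ L m : ℕ) (hL : 1 ≤ L)
    (F : Type) [Field F] [Fintype F] (hq : Fintype.card F = q)
    (V : Fin m → Submodule F (Fin (2 * ℓ + 1) → F))
    (hnice : IsNice F ℓ L V) :
    ∃ enc : (Fin (q ^ (2 * ℓ + 1)) → ZMod 2) →ₗ[ZMod 2]
        (Fin (q ^ (2 * ℓ + 1) + m * q ^ (ℓ + 1)) → ZMod 2),
      IsBatchCode (q ^ (2 * ℓ + 1) + m * q ^ (ℓ + 1)) (q ^ (2 * ℓ + 1)) (m / L)
        enc := by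
  obtain ⟨hrank, hdisj, hcoset⟩ := hnice
  have hF : Nat.card F = q := by rw [Nat.card_eq_fintype_card, hq]
  have hpoints : Nat.card (Fin (2 * ℓ + 1) → F) = q ^ (2 * ℓ + 1) := by
    rw [Nat.card_fun, hF, Nat.card_fin]
  have hcosets (i : Fin m) : Nat.card ((Fin (2 * ℓ + 1) → F) ⧸ V i) = q ^ (ℓ + 1) := by
    rw [natCard_quotient_eq_pow, hF, Module.finrank_fin_fun, hrank i]
    congr 1
    omega
  have hsymbols : Nat.card ((Fin (2 * ℓ + 1) → F) ⊕ Σ i, (Fin (2 * ℓ + 1) → F) ⧸ V i) =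
      q ^ (2 * ℓ + 1) + m * q ^ (ℓ + 1) := by
    rw [Nat.card_sum, Nat.card_sigma, hpoints]
    simp only [hcosets, sum_const, card_univ, Fintype.card_fin, smul_eq_mul]
  have hk : m / L * L ≤ Fintype.card (Fin m) := by
    simpa using Nat.div_mul_le_self m L
  exact ⟨_, (isBatchCodeOn_cosetCode V hL (fun i j hij => disjoint_iff.2 (hdisj i j hij))
    hcoset hk).isBatchCode ((Finite.equivFin _).trans (finCongr hpoints))
    ((Finite.equivFin _).trans (finCongr hsymbols))⟩

/-- From an `L`-nice collection of `m` subspaces of `𝔽_q^{2ℓ+1}` one obtains a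
binary primitive `[q^{2ℓ+1} + m q^{ℓ+1}, q^{2ℓ+1}, ⌊m/L⌋]` batch code. -/
theorem batch_code_of_nice_collection (q ℓ L m : ℕ) (hℓ : 1 ≤ ℓ) (hL : 1 ≤ L)
    (hm : 1 ≤ m) (F : Type) [Field F] [Fintype F] (hq : Fintype.card F = q)
    (V : Fin m → Submodule F (Fin (2 * ℓ + 1) → F))
    (hnice : IsNice F ℓ L V) :
    ∃ enc : (Fin (q ^ (2 * ℓ + 1)) → ZMod 2) →ₗ[ZMod 2]
        (Fin (q ^ (2 * ℓ + 1) + m * q ^ (ℓ + 1)) → ZMod 2),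
      IsBatchCode (q ^ (2 * ℓ + 1) + m * q ^ (ℓ + 1)) (q ^ (2 * ℓ + 1)) (m / L)
        enc :=
  batch_code_of_nice_collection_general q ℓ L m hL F hq V hnice
end

section
/- For every integer ℓ ≥ 1, every integer L ≥ ℓ and every prime power q, there exists an L-nice collection of ℓ-dimensional subspaces of 𝔽_q^{2ℓ+1} of cardinality ⌊(q−1)/ℓ⌋; in particular, the maximal cardinality m(L,ℓ,q) of an L-nice collection satisfies m(L,ℓ,q) ≥ ⌊(q−1)/ℓ⌋. -/
open Polynomial Finset Lagrange

section MomentCurve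

variable {F : Type*} [Field F]

def momentVector (n : ℕ) (t : F) : Fin n → F := fun k => t ^ (k : ℕ)

noncomputable def momentPairing (n : ℕ) : (Fin n → F) →ₗ[F] F[X] →ₗ[F] F :=
  LinearMap.mk₂ F (fun w f => ∑ k : Fin n, w k * f.coeff k)
    (fun w w' f => by simp only [Pi.add_apply, add_mul, sum_add_distrib])
    (fun c w f => by simp only [Pi.smul_apply, smul_eq_mul, mul_sum, mul_assoc])
    (fun w f f' => by simp only [coeff_add, mul_add, sum_add_distrib])
    (fun c w f => by simp only [coeff_smul, smul_eq_mul, mul_sum, mul_left_comm])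

theorem momentPairing_momentVector {n : ℕ} (t : F) {f : F[X]} (hf : f.natDegree < n) :
    momentPairing n (momentVector n t) f = f.eval t := by
  rw [eval_eq_sum_range' hf, ← Fin.sum_univ_eq_sum_range]
  simp only [momentPairing, LinearMap.mk₂_apply, momentVector, mul_comm]

theorem momentPairing_sum_smul {n : ℕ} {ι : Type*} [Fintype ι] (c x : ι → F) {f : F[X]}
    (hf : f.natDegree < n) :
    momentPairing n (∑ i, c i • momentVector n (x i)) f = ∑ i, c i * f.eval (x i) := by
  simp only [map_sum, map_smul, LinearMap.sum_apply, LinearMap.smul_apply,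
    momentPairing_momentVector _ hf, smul_eq_mul]

theorem eq_zero_of_momentPairing_sum_smul_eq_zero {n : ℕ} {ι : Type*} [Fintype ι]
    {c x : ι → F} {f : F[X]} (hf : f.natDegree < n)
    (h : momentPairing n (∑ i, c i • momentVector n (x i)) f = 0) {i₀ : ι}
    (hroot : ∀ i ≠ i₀, f.eval (x i) = 0) (hi₀ : f.eval (x i₀) ≠ 0) : c i₀ = 0 := by
  rw [momentPairing_sum_smul c x hf,
    Fintype.sum_eq_single i₀ fun i hi => by rw [hroot i hi, mul_zero]] at h
  exact (mul_eq_zero.mp h).resolve_right hi₀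

theorem linearIndependent_momentVector {n : ℕ} {ι : Type*} [Fintype ι]
    {x : ι → F} (hx : Function.Injective x) (hn : Fintype.card ι ≤ n) :
    LinearIndependent F fun i => momentVector n (x i) := by
  classical
  refine Fintype.linearIndependent_iff.mpr fun c hc i₀ => ?_
  have hinj : Set.InjOn x (univ : Finset ι) := hx.injOn
  refine eq_zero_of_momentPairing_sum_smul_eq_zero (f := Lagrange.basis univ x i₀) ?_
    (by rw [hc, map_zero, LinearMap.zero_apply]) (fun i hi => eval_basis_of_ne hi.symm (mem_univ i))
    (by rw [eval_basis_self hinj (mem_univ i₀)]; exact one_ne_zero)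
  rw [natDegree_basis hinj (mem_univ i₀), card_univ]
  have := Fintype.card_pos_iff.mpr ⟨i₀⟩
  omega

theorem momentPairing_eq_zero_of_mem_span {n : ℕ} {ι : Type*} {a : ι → F} {w : Fin n → F}
    (hw : w ∈ Submodule.span F (Set.range fun i => momentVector n (a i))) {f : F[X]}
    (hf : f.natDegree < n) (hroot : ∀ i, f.eval (a i) = 0) : momentPairing n w f = 0 := by
  suffices Submodule.span F (Set.range fun i => momentVector n (a i)) ≤
      LinearMap.ker ((momentPairing n).flip f) from this hw
  rw [Submodule.span_le]
  rintro _ ⟨i, rfl⟩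
  simp [momentPairing_momentVector _ hf, hroot]

theorem mem_span_momentVector_of_momentPairing_nodal_mul {n : ℕ} {ι κ : Type*}
    [Fintype ι] [Fintype κ] {a : ι → F} {z : κ → F}
    (hinj : Function.Injective (Sum.elim a z))
    (hn : Fintype.card ι + Fintype.card κ = n) {v : Fin n → F}
    (hv : ∀ f ∈ degreeLT F (Fintype.card κ), momentPairing n v (nodal univ a * f) = 0) :
    v ∈ Submodule.span F (Set.range fun i => momentVector n (a i)) := by
  classical
  have hli := linearIndependent_momentVector (n := n) hinj (by simp [hn])
  have htop := hli.span_eq_top_of_card_eq_finrank' (by simp [hn])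
  obtain ⟨c, rfl⟩ := (Submodule.mem_span_range_iff_exists_fun F).mp
    (htop ▸ Submodule.mem_top : v ∈ _)
  have hz : ∀ k, c (Sum.inr k) = 0 := fun k => by
    have hzinj : Set.InjOn z (univ : Finset κ) := (hinj.comp Sum.inr_injective).injOn
    have hκ : 0 < Fintype.card κ := Fintype.card_pos_iff.mpr ⟨k⟩
    have hb : Lagrange.basis univ z k ∈ degreeLT F (Fintype.card κ) := by
      rw [mem_degreeLT, degree_basis hzinj (mem_univ k), card_univ]
      exact_mod_cast Nat.sub_lt hκ one_pos
    refine eq_zero_of_momentPairing_sum_smul_eq_zero ?_ (hv _ hb) (i₀ := Sum.inr k) ?_ ?_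
    · calc _ ≤ (nodal univ a).natDegree + (Lagrange.basis univ z k).natDegree :=
            natDegree_mul_le
        _ < n := by
          rw [natDegree_nodal, natDegree_basis hzinj (mem_univ k), card_univ, card_univ]
          omega
    · rintro (i | k') hk
      · simp [eval_nodal_at_node (mem_univ i)]
      · simp [eval_basis_of_ne (fun h => hk (congrArg Sum.inr h.symm)) (mem_univ k')]
    · simp only [Sum.elim_inr, eval_mul, eval_basis_self hzinj (mem_univ k), mul_one]
      exact eval_nodal_not_at_node fun i _ h =>
        Sum.inr_ne_inl (hinj (a₁ := .inr k) (a₂ := .inl i) h)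
  rw [Fintype.sum_sum_type]
  simp only [hz, zero_smul, sum_const_zero, add_zero, Sum.elim_inl]
  exact Submodule.sum_mem _ fun i _ => Submodule.smul_mem _ _ (Submodule.subset_span ⟨i, rfl⟩)

theorem momentPairing_nodal_mul_nodal_eq_zero {n : ℕ} {ι κ : Type*} [Fintype ι] [Fintype κ]
    {a : ι → F} {b : κ → F} (hn : Fintype.card ι + Fintype.card κ < n) {v w : Fin n → F}
    (hw : w ∈ Submodule.span F (Set.range fun i => momentVector n (a i)))
    (hvw : v + w ∈ Submodule.span F (Set.range fun k => momentVector n (b k))) :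
    momentPairing n v (nodal univ a * nodal univ b) = 0 := by
  have hdeg : (nodal univ a * nodal univ b).natDegree < n :=
    natDegree_mul_le.trans_lt (by simpa only [natDegree_nodal, card_univ])
  rw [show v = (v + w) - w by abel, map_sub, LinearMap.sub_apply,
    momentPairing_eq_zero_of_mem_span hvw hdeg
      fun k => by rw [eval_mul, eval_nodal_at_node (mem_univ k), mul_zero],
    momentPairing_eq_zero_of_mem_span hw hdeg
      fun i => by rw [eval_mul, eval_nodal_at_node (mem_univ i), zero_mul], sub_zero]

end MomentCurve

section GeometricNodal

variable {F : Type*} [Field F]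

theorem Lagrange.scaleRoots_nodal {ι : Type*} (s : Finset ι) (v : ι → F) (t : F) :
    (nodal s v).scaleRoots t = nodal s fun i => v i * t := by
  classical
  induction s using Finset.induction_on with
  | empty => simp [nodal_empty]
  | insert i s hi ih =>
    rw [nodal_insert_eq_nodal hi, nodal_insert_eq_nodal hi, mul_scaleRoots_of_noZeroDivisors,
      X_sub_C_scaleRoots, ih]

noncomputable def geomNodal (g : F) (k : ℕ) : F[X] := nodal (range k) (g ^ ·)

theorem geomNodal_succ (g : F) (k : ℕ) :
    geomNodal g (k + 1) = geomNodal g k * (X - C (g ^ k)) :=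
  prod_range_succ _ k

theorem geomNodal_succ' (g : F) (k : ℕ) :
    geomNodal g (k + 1) = (geomNodal g k).scaleRoots g * (X - C 1) := by
  simp only [geomNodal, scaleRoots_nodal]
  simp only [nodal, prod_range_succ', pow_zero, pow_succ, mul_comm]

theorem geomNodal_monic (g : F) (k : ℕ) : (geomNodal g k).Monic := nodal_monic

theorem natDegree_geomNodal (g : F) (k : ℕ) : (geomNodal g k).natDegree = k := by
  rw [geomNodal, natDegree_nodal, card_range]

theorem coeff_geomNodal_mul_one_sub_pow (g : F) {k i : ℕ} (hi : i < k) :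
    (geomNodal g k).coeff i * (1 - g ^ (k - i)) =
      (geomNodal g k).coeff (i + 1) * g ^ (k - (i + 1)) * (g ^ (i + 1) - 1) := by
  have h := congrArg (coeff · (i + 1)) ((geomNodal_succ g k).symm.trans (geomNodal_succ' g k))
  simp only [coeff_mul_X_sub_C, coeff_scaleRoots, natDegree_geomNodal] at h
  have hk : g ^ k = g ^ (k - (i + 1)) * g ^ (i + 1) := by rw [← pow_add]; congr 1; omega
  have hk' : g ^ (k - i) = g ^ (k - (i + 1)) * g := by rw [← pow_succ]; congr 1; omega
  rw [hk, hk'] at h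
  rw [hk']
  linear_combination h

theorem coeff_geomNodal_ne_zero {g : F} (hg₀ : g ≠ 0) {k : ℕ}
    (hg : ∀ e, 0 < e → e ≤ k → g ^ e ≠ 1) {i : ℕ} (hi : i ≤ k) :
    (geomNodal g k).coeff i ≠ 0 := by
  induction hi using Nat.decreasingInduction with
  | self =>
    have h := (geomNodal_monic g k).coeff_natDegree
    rw [natDegree_geomNodal] at h
    exact h ▸ one_ne_zero
  | of_succ i hik ih =>
    intro h0
    have h := coeff_geomNodal_mul_one_sub_pow g hik
    rw [h0, zero_mul, eq_comm] at h
    exact mul_ne_zero (mul_ne_zero ih (pow_ne_zero _ hg₀))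
      (sub_ne_zero.mpr (hg _ i.succ_pos hik)) h

theorem linearIndependent_scaleRoots {p : F[X]} (hp : ∀ i ≤ p.natDegree, p.coeff i ≠ 0)
    {κ : Type*} [Fintype κ] {t : κ → F} (ht : Function.Injective t)
    (hκ : Fintype.card κ ≤ p.natDegree + 1) :
    LinearIndependent F fun k => p.scaleRoots (t k) := by
  refine Fintype.linearIndependent_iff.mpr fun c hc => ?_
  have hli : LinearIndependent F fun k => momentVector (p.natDegree + 1) (t k) :=
    linearIndependent_momentVector ht hκ
  refine Fintype.linearIndependent_iff.mp hli c ?_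
  ext e
  have he : p.natDegree - (p.natDegree - e) = e := Nat.sub_sub_self (Nat.lt_succ_iff.mp e.2)
  have h := congrArg (coeff · (p.natDegree - e)) hc
  simp only [finsetSum_coeff, coeff_smul, coeff_scaleRoots, he, smul_eq_mul, coeff_zero] at h
  have h' : p.coeff (p.natDegree - e) * ∑ k, c k * t k ^ (e : ℕ) = 0 := by
    rw [mul_sum, ← h]
    exact sum_congr rfl fun k _ => by ring
  simpa [momentVector] using (mul_eq_zero.mp h').resolve_left (hp _ (Nat.sub_le _ _))

theorem span_scaleRoots_eq_degreeLT {p : F[X]} (hp : ∀ i ≤ p.natDegree, p.coeff i ≠ 0)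
    {κ : Type*} [Fintype κ] {t : κ → F} (ht : Function.Injective t)
    (hκ : Fintype.card κ = p.natDegree + 1) :
    Submodule.span F (Set.range fun k => p.scaleRoots (t k)) = degreeLT F (p.natDegree + 1) := by
  have : FiniteDimensional F (degreeLT F (p.natDegree + 1)) :=
    (degreeLTEquiv F (p.natDegree + 1)).symm.finiteDimensional
  refine Submodule.eq_of_le_of_finrank_eq ?_ ?_
  · rw [Submodule.span_le]
    rintro _ ⟨k, rfl⟩
    rw [SetLike.mem_coe, mem_degreeLT, degree_scaleRoots]
    exact degree_le_natDegree.trans_lt (WithBot.coe_lt_coe.mpr p.natDegree.lt_succ_self)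
  · rw [finrank_span_eq_card (linearIndependent_scaleRoots hp ht hκ.le), hκ,
      (degreeLTEquiv F _).finrank_eq, Module.finrank_fin_fun]

end GeometricNodal

section BlockConstruction

variable {F : Type*} [Field F] (g : F) (ℓ : ℕ)

def blockPoint (j : ℕ) (r : Fin ℓ) : F := g ^ (ℓ * j + r)

noncomputable def blockSubspace (j : ℕ) : Submodule F (Fin (2 * ℓ + 1) → F) :=
  Submodule.span F (Set.range fun r => momentVector (2 * ℓ + 1) (blockPoint g ℓ j r))

theorem nodal_blockPoint (j : ℕ) :
    nodal univ (blockPoint g ℓ j) = (geomNodal g ℓ).scaleRoots (g ^ (ℓ * j)) := by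
  rw [geomNodal, scaleRoots_nodal]
  simp only [nodal, blockPoint]
  rw [Fin.prod_univ_eq_prod_range (fun r => X - C (g ^ (ℓ * j + r)))]
  simp only [pow_add, mul_comm]

variable {g ℓ}

theorem span_nodal_blockPoint (hg₀ : g ≠ 0) (hg : ∀ e, 0 < e → e ≤ ℓ → g ^ e ≠ 1)
    {κ : Type*} [Fintype κ] (hκ : Fintype.card κ = ℓ + 1) {y : κ → ℕ}
    (hy : Function.Injective fun k => g ^ (ℓ * y k)) :
    Submodule.span F (Set.range fun k => nodal univ (blockPoint g ℓ (y k))) =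
      degreeLT F (ℓ + 1) := by
  have hcoeff : ∀ e ≤ (geomNodal g ℓ).natDegree, (geomNodal g ℓ).coeff e ≠ 0 :=
    fun e he => coeff_geomNodal_ne_zero hg₀ hg (natDegree_geomNodal g ℓ ▸ he)
  simp only [nodal_blockPoint]
  rw [span_scaleRoots_eq_degreeLT hcoeff hy (by rw [hκ, natDegree_geomNodal]),
    natDegree_geomNodal]

variable {m : ℕ} (hg : Set.InjOn (g ^ ·) (Set.Iio (ℓ * m)))
include hg

theorem eq_of_pow_mul_add_eq {j j' r r' : ℕ} (hj : j < m) (hj' : j' < m) (hr : r < ℓ)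
    (hr' : r' < ℓ) (h : g ^ (ℓ * j + r) = g ^ (ℓ * j' + r')) : j = j' ∧ r = r' := by
  have hlt : ∀ {j r}, j < m → r < ℓ → ℓ * j + r ∈ Set.Iio (ℓ * m) := fun hj hr =>
    calc ℓ * _ + _ < ℓ * (_ + 1) := by rw [mul_add_one]; omega
      _ ≤ ℓ * m := Nat.mul_le_mul_left ℓ hj
  have he := hg (hlt hj hr) (hlt hj' hr') h
  have hℓ : 0 < ℓ := by omega
  have hdiv := congrArg (· / ℓ) he
  have hmod := congrArg (· % ℓ) he
  simp only [Nat.mul_add_div hℓ, Nat.div_eq_of_lt hr, Nat.div_eq_of_lt hr', Nat.mul_add_mod,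
    Nat.mod_eq_of_lt hr, Nat.mod_eq_of_lt hr', add_zero] at hdiv hmod
  exact ⟨hdiv, hmod⟩

theorem pow_ne_one_of_injOn_Iio {e : ℕ} (he₀ : 0 < e) (he : e < ℓ * m) : g ^ e ≠ 1 := fun h =>
  he₀.ne' (hg (Set.mem_Iio.mpr he) (Set.mem_Iio.mpr (he₀.trans he)) (by simpa using h))

theorem blockPoint_injective {j : ℕ} (hj : j < m) : Function.Injective (blockPoint g ℓ j) :=
  fun r r' h => Fin.ext (eq_of_pow_mul_add_eq hg hj hj r.2 r'.2 h).2

theorem blockPoint_ne_blockPoint {i j : ℕ} (hi : i < m) (hj : j < m) (hij : i ≠ j)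
    (r r' : Fin ℓ) : blockPoint g ℓ i r ≠ blockPoint g ℓ j r' :=
  fun h => hij (eq_of_pow_mul_add_eq hg hi hj r.2 r'.2 h).1

theorem finrank_blockSubspace {j : ℕ} (hj : j < m) :
    Module.finrank F (blockSubspace g ℓ j) = ℓ := by
  rw [blockSubspace, finrank_span_eq_card
    (linearIndependent_momentVector (blockPoint_injective hg hj) (by simp; omega)),
    Fintype.card_fin]

theorem blockSubspace_inf_eq_bot {i j : ℕ} (hi : i < m) (hj : j < m) (hij : i ≠ j) :
    blockSubspace g ℓ i ⊓ blockSubspace g ℓ j = ⊥ := by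
  have hinj : Function.Injective (Sum.elim (blockPoint g ℓ i) (blockPoint g ℓ j)) :=
    (blockPoint_injective hg hi).sumElim (blockPoint_injective hg hj)
      (blockPoint_ne_blockPoint hg hi hj hij)
  have hli : LinearIndependent F (momentVector (2 * ℓ + 1) ∘ Sum.elim _ _) :=
    linearIndependent_momentVector hinj (by simp; omega)
  rw [Sum.comp_elim] at hli
  exact disjoint_iff.mp (linearIndependent_sum.mp hli).2.2

theorem mem_blockSubspace_of_forall_exists (hg₀ : g ≠ 0) {i : ℕ} (hi : i < m) {κ : Type*}
    [Fintype κ] (hκ : Fintype.card κ = ℓ + 1) {y : κ → ℕ}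
    (hy : Function.Injective y) (hym : ∀ k, y k < m) (hyi : ∀ k, y k ≠ i)
    {v : Fin (2 * ℓ + 1) → F}
    (hv : ∀ k, ∃ w ∈ blockSubspace g ℓ i, v + w ∈ blockSubspace g ℓ (y k)) :
    v ∈ blockSubspace g ℓ i := by
  -- `t k` scales the roots of `geomNodal g ℓ` to block `y k`; the `t k` are also the extra nodes.
  set t : κ → F := fun k => g ^ (ℓ * y k)
  have ht : Function.Injective t := by
    obtain rfl | hℓ := ℓ.eq_zero_or_pos
    · have : Subsingleton κ := Fintype.card_le_one_iff_subsingleton.mp hκ.le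
      exact Function.injective_of_subsingleton t
    · exact fun a b h => hy (eq_of_pow_mul_add_eq hg (hym a) (hym b) hℓ hℓ h).1
  have hinj : Function.Injective (Sum.elim (blockPoint g ℓ i) t) :=
    (blockPoint_injective hg hi).sumElim ht fun r k h =>
      hyi k (eq_of_pow_mul_add_eq hg hi (hym k) r.2 r.pos h).1.symm
  have hm : 2 ≤ m := by
    obtain ⟨k⟩ : Nonempty κ := Fintype.card_pos_iff.mp (by omega)
    have := hym k
    have := hyi k
    omega
  have hspan := span_nodal_blockPoint hg₀ (fun e he₀ heℓ => pow_ne_one_of_injOn_Iio hg he₀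
    (heℓ.trans_lt (by nlinarith))) hκ ht
  refine mem_span_momentVector_of_momentPairing_nodal_mul hinj (by simp; omega) fun f hf => ?_
  rw [hκ, ← hspan] at hf
  suffices Submodule.span F (Set.range fun k => nodal univ (blockPoint g ℓ (y k))) ≤
      LinearMap.ker (momentPairing (2 * ℓ + 1) v ∘ₗ
        LinearMap.mulLeft F (nodal univ (blockPoint g ℓ i))) from this hf
  rw [Submodule.span_le]
  rintro _ ⟨k, rfl⟩
  obtain ⟨w, hw, hvw⟩ := hv k
  exact momentPairing_nodal_mul_nodal_eq_zero (by simp; omega) hw hvw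

theorem isNice_blockSubspace (hg₀ : g ≠ 0) :
    IsNice F ℓ ℓ fun j : Fin m => blockSubspace g ℓ j := by
  classical
  refine ⟨fun j => finrank_blockSubspace hg j.2,
    fun i j hij => blockSubspace_inf_eq_bot hg i.2 j.2 (Fin.val_ne_of_ne hij), fun i v hv => ?_⟩
  by_contra! hcard
  obtain ⟨y⟩ : Nonempty (Fin (ℓ + 1) ↪
      {j : Fin m // ∃ w ∈ blockSubspace g ℓ i, v + w ∈ blockSubspace g ℓ j}) :=
    Function.Embedding.nonempty_of_card_le
      (by rw [Fintype.card_fin, ← Nat.card_eq_fintype_card]; omega)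
  refine hv (mem_blockSubspace_of_forall_exists hg hg₀ i.2 (Fintype.card_fin _)
    (fun a b h => y.injective (Subtype.ext (Fin.ext h))) (fun k => (y k).1.2) (fun k hk => ?_)
    fun k => (y k).2)
  obtain ⟨w, hw, hvw⟩ := (y k).2
  rw [hk] at hvw
  exact hv (by simpa using (blockSubspace g ℓ i).sub_mem hvw hw)

end BlockConstruction

theorem IsNice.mono {F : Type*} [Field F] {ℓ L L' m : ℕ}
    {V : Fin m → Submodule F (Fin (2 * ℓ + 1) → F)} (h : IsNice F ℓ L V) (hL : L ≤ L') :
    IsNice F ℓ L' V :=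
  ⟨h.1, h.2.1, fun i v hv => (h.2.2 i v hv).trans hL⟩

theorem exists_nice_collection_general (q ℓ L : ℕ) (hL : ℓ ≤ L)
    (F : Type) [Field F] [Fintype F] (hq : Fintype.card F = q) :
    ∃ V : Fin ((q - 1) / ℓ) → Submodule F (Fin (2 * ℓ + 1) → F),
      IsNice F ℓ L V := by
  obtain ⟨g, hg⟩ := IsCyclic.exists_generator (α := Fˣ)
  have horder : orderOf (g : F) = q - 1 := by
    rw [orderOf_units, orderOf_eq_card_of_forall_mem_zpowers hg, Nat.card_units,
      Nat.card_eq_fintype_card, hq]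
  have hinj : Set.InjOn ((g : F) ^ ·) (Set.Iio (ℓ * ((q - 1) / ℓ))) :=
    pow_injOn_Iio_orderOf.mono (Set.Iio_subset_Iio (horder ▸ Nat.mul_div_le (q - 1) ℓ))
  exact ⟨_, (isNice_blockSubspace hinj g.ne_zero).mono hL⟩

/-- For every `ℓ ≥ 1`, every `L ≥ ℓ` and every prime power `q` there exists an
`L`-nice collection of `ℓ`-dimensional subspaces of `𝔽_q^{2ℓ+1}` of cardinality
`⌊(q-1)/ℓ⌋`; hence `m(L, ℓ, q) ≥ ⌊(q-1)/ℓ⌋`. -/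
theorem exists_nice_collection (q ℓ L : ℕ) (hℓ : 1 ≤ ℓ) (hL : ℓ ≤ L)
    (F : Type) [Field F] [Fintype F] (hq : Fintype.card F = q) :
    ∃ V : Fin ((q - 1) / ℓ) → Submodule F (Fin (2 * ℓ + 1) → F),
      IsNice F ℓ L V :=
  exists_nice_collection_general q ℓ L hL F hq
end

section
/- Let ℓ ≥ 1 and L ≥ 1 be integers and q a prime power with L ≤ q^ℓ − 1. Then every L-nice collection {V_1,…,V_m} of ℓ-dimensional subspaces of 𝔽_q^{2ℓ+1} satisfies m ≤ (L+1)·q. -/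
/-!
Fix a member `V₀` of the collection and pass to `Q = F^{2ℓ+1} / V₀`, of dimension `ℓ + 1`.
Every other `Vⱼ` meets `V₀` trivially, so it maps isomorphically onto an `ℓ`-dimensional
subspace `Wⱼ` of `Q`; a nonzero class `v + V₀` lies in `Wⱼ` exactly when the coset `v + V₀`
meets `Vⱼ`, hence in at most `L` of the `Wⱼ`. Counting incidences between the `Wⱼ` and the
nonzero vectors of `Q` gives `(m - 1)(q^ℓ - 1) ≤ (q^{ℓ+1} - 1) L`, and `L ≤ q^ℓ - 1` turns this
into `m ≤ (L + 1) q`.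
-/

open Finset Module

theorem le_succ_mul_of_sub_one_mul_le {m q t L : ℕ} (hq : 0 < q) (hL : 0 < L) (hLt : L ≤ t - 1)
    (h : (m - 1) * (t - 1) ≤ (t * q - 1) * L) : m ≤ (L + 1) * q := by
  obtain ⟨a, rfl⟩ : ∃ a, t = a + 1 := ⟨t - 1, by omega⟩
  obtain ⟨p, rfl⟩ : ∃ p, q = p + 1 := ⟨q - 1, by omega⟩
  by_contra! hm
  obtain ⟨n, rfl⟩ : ∃ n, m = n + 1 := ⟨m - 1, by omega⟩
  have e : (a + 1) * (p + 1) - 1 = a * (p + 1) + p := by rw [add_mul, one_mul]; omega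
  simp only [Nat.add_sub_cancel, e] at h hLt
  nlinarith

namespace Submodule

variable {R M : Type*} [Ring R] [AddCommGroup M] [Module R M] {U V : Submodule R M}

theorem mkQ_mem_map_mkQ_iff {v : M} : U.mkQ v ∈ V.map U.mkQ ↔ ∃ w ∈ U, v + w ∈ V := by
  simp only [mem_map, mkQ_apply, Quotient.eq]
  constructor
  · rintro ⟨u, hu, huv⟩
    exact ⟨u - v, huv, by simpa⟩
  · rintro ⟨w, hw, hvw⟩
    exact ⟨v + w, hvw, by simpa⟩

theorem finrank_map_mkQ_of_inf_eq_bot [StrongRankCondition R] (h : U ⊓ V = ⊥) :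
    finrank R (V.map U.mkQ) = finrank R V := by
  have hinj : Function.Injective (U.mkQ ∘ₗ V.subtype) := by
    rw [← LinearMap.ker_eq_bot, LinearMap.ker_comp, ker_mkQ, ← disjoint_iff_comap_eq_bot,
      disjoint_iff, inf_comm, h]
  rw [← range_subtype V, ← LinearMap.range_comp, LinearMap.finrank_range_of_inj hinj,
    range_subtype]

end Submodule

open Classical in
theorem card_mul_le_of_forall_card_mem_le {K Q ι : Type*} [Field K] [AddCommGroup Q]
    [Module K Q] [Finite Q] (W : ι → Submodule K Q) (s : Finset ι) {d L : ℕ}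
    (hW : ∀ j ∈ s, finrank K (W j) = d) (hL : ∀ x : Q, x ≠ 0 → #{j ∈ s | x ∈ W j} ≤ L) :
    #s * (Nat.card K ^ d - 1) ≤ (Nat.card Q - 1) * L := by
  have := Fintype.ofFinite Q
  have h := card_mul_le_card_mul (fun j (x : Q) => x ∈ W j) (s := s) (t := univ.erase 0)
    (m := Nat.card K ^ d - 1) (n := L) ?_ ?_
  · rwa [card_erase_of_mem (mem_univ _), card_univ, ← Nat.card_eq_fintype_card] at h
  · intro j hj
    rw [bipartiteAbove, filter_erase, card_erase_of_mem (by simp), ← hW j hj,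
      ← Module.natCard_eq_pow_finrank (K := K), ← Fintype.card_subtype, Nat.card_eq_fintype_card]
  · intro x hx
    exact hL x (ne_of_mem_erase hx)

theorem nice_collection_card_le_general (q ℓ L m : ℕ) (hL : 1 ≤ L)
    (hLq : L ≤ q ^ ℓ - 1)
    (F : Type) [Field F] [Fintype F] (hq : Fintype.card F = q)
    (V : Fin m → Submodule F (Fin (2 * ℓ + 1) → F))
    (hnice : IsNice F ℓ L V) :
    m ≤ (L + 1) * q := by
  classical
  obtain ⟨hdim, hdisj, hcoset⟩ := hnice
  rcases Nat.eq_zero_or_pos m with rfl | hm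
  · exact Nat.zero_le _
  set i₀ : Fin m := ⟨0, hm⟩
  set V₀ := V i₀
  have hcardQ : Nat.card (_ ⧸ V₀) = q ^ ℓ * q := by
    rw [Module.natCard_eq_pow_finrank (K := F), Submodule.finrank_quotient, hdim,
      finrank_fin_fun, Nat.card_eq_fintype_card, hq, ← pow_succ]
    congr 1
    omega
  have hrank : ∀ j ∈ univ.erase i₀, finrank F ((V j).map V₀.mkQ) = ℓ := fun j hj => by
    rw [Submodule.finrank_map_mkQ_of_inf_eq_bot (hdisj _ _ (ne_of_mem_erase hj).symm), hdim]
  have hcover (x) (hx : x ≠ 0) : #{j ∈ univ.erase i₀ | x ∈ (V j).map V₀.mkQ} ≤ L := by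
    obtain ⟨v, rfl⟩ := V₀.mkQ_surjective x
    calc _ ≤ #{j | ∃ w ∈ V₀, v + w ∈ V j} := card_le_card fun j hj =>
          mem_filter.2 ⟨mem_univ _, Submodule.mkQ_mem_map_mkQ_iff.1 (mem_filter.1 hj).2⟩
      _ = Nat.card {j // ∃ w ∈ V₀, v + w ∈ V j} := by
          rw [Nat.card_eq_fintype_card, Fintype.card_subtype]
      _ ≤ L := hcoset _ v (by simpa [Submodule.Quotient.mk_eq_zero] using hx)
  have hcount := card_mul_le_of_forall_card_mem_le _ _ hrank hcover
  rw [card_erase_of_mem (mem_univ _), card_univ, Fintype.card_fin,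
    Nat.card_eq_fintype_card (α := F), hq, hcardQ] at hcount
  exact le_succ_mul_of_sub_one_mul_le (hq ▸ Fintype.card_pos) hL hLq hcount

/-- Upper bound on the size of a nice collection: if `L ≤ q^ℓ - 1`, then every
`L`-nice collection of `ℓ`-dimensional subspaces of `𝔽_q^{2ℓ+1}` has at most
`(L+1)·q` members. -/
theorem nice_collection_card_le (q ℓ L m : ℕ) (hℓ : 1 ≤ ℓ) (hL : 1 ≤ L)
    (hLq : L ≤ q ^ ℓ - 1)
    (F : Type) [Field F] [Fintype F] (hq : Fintype.card F = q)
    (V : Fin m → Submodule F (Fin (2 * ℓ + 1) → F))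
    (hnice : IsNice F ℓ L V) :
    m ≤ (L + 1) * q :=
  nice_collection_card_le_general q ℓ L m hL hLq F hq V hnice
end

section
/- Let q be a prime power with q ≥ ℓ + 2 for an integer ℓ ≥ 1, let α be a generator of 𝔽_q^×, and let i_1 < i_2 < … < i_{ℓ+1} be nonnegative integers with ℓ·i_{ℓ+1} + ℓ − 1 ≤ q − 2. Then the ℓ+1 polynomials f_u(x) = ∏_{j=0}^{ℓ−1} (x − α^{ℓ·i_u + j}) ∈ 𝔽_q[x], u ∈ [ℓ+1], are linearly independent over 𝔽_q. -/
/-!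
Write `g = ∏_{j<ℓ} (X - α^j)` and `s_u = α^(ℓ i_u)`. Then `f_u` is `g` with its roots scaled by
`s_u`, so the coefficient of `X^k` in `f_u` is `s_u^(ℓ-k) g_k`. Scaling the roots of `g` by `α`
trades the root `1` for `α^ℓ`; comparing coefficients gives a two-term recurrence showing that
`g_0, …, g_ℓ` are all nonzero as long as `α^k ≠ 1` for `0 < k ≤ ℓ`. A linear relation
`∑ c_u f_u = 0` therefore yields `∑ c_u s_u^m = 0` for all `m ≤ ℓ`, and since the `s_u` are distinct
the Vandermonde determinant forces `c = 0`.
-/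

open Polynomial

namespace Polynomial

variable {R ι : Type*}

lemma natDegree_prod_range_X_sub_C [CommRing R] [Nontrivial R] (r : ℕ → R) (n : ℕ) :
    (∏ j ∈ Finset.range n, (X - C (r j))).natDegree = n := by
  rw [natDegree_finsetProd_X_sub_C_eq_card, Finset.card_range]

lemma scaleRoots_prod [CommSemiring R] [NoZeroDivisors R] (t : Finset ι) (p : ι → R[X]) (s : R) :
    (∏ j ∈ t, p j).scaleRoots s = ∏ j ∈ t, (p j).scaleRoots s := by
  classical
  induction t using Finset.induction_on with
  | empty => simp
  | insert j t hj ih =>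
    rw [Finset.prod_insert hj, Finset.prod_insert hj, mul_scaleRoots_of_noZeroDivisors, ih]

lemma prod_X_sub_C_scaleRoots [CommRing R] [NoZeroDivisors R] (t : Finset ι) (r : ι → R)
    (s : R) : (∏ j ∈ t, (X - C (r j))).scaleRoots s = ∏ j ∈ t, (X - C (r j * s)) := by
  simp [scaleRoots_prod]

lemma prod_range_X_sub_C_pow_scaleRoots_mul [CommRing R] [NoZeroDivisors R] (a : R) (n : ℕ) :
    (∏ j ∈ Finset.range n, (X - C (a ^ j))).scaleRoots a * (X - C 1) =
      (∏ j ∈ Finset.range n, (X - C (a ^ j))) * (X - C (a ^ n)) := by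
  rw [prod_X_sub_C_scaleRoots, ← Finset.prod_range_succ]
  simp_rw [← pow_succ]
  rw [Finset.prod_range_succ' _ n, pow_zero]

lemma coeff_prod_range_X_sub_C_pow_mul [CommRing R] [IsDomain R] (a : R) {n k : ℕ}
    (hk : k < n) :
    (∏ j ∈ Finset.range n, (X - C (a ^ j))).coeff k * (a ^ (n - k) - 1) =
      (∏ j ∈ Finset.range n, (X - C (a ^ j))).coeff (k + 1) * a ^ (n - (k + 1)) *
        (1 - a ^ (k + 1)) := by
  have h := congrArg (coeff · (k + 1)) (prod_range_X_sub_C_pow_scaleRoots_mul a n)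
  simp only [coeff_mul_X_sub_C, coeff_scaleRoots, natDegree_prod_range_X_sub_C] at h
  have hn : a ^ n = a ^ (n - (k + 1)) * a ^ (k + 1) := by rw [← pow_add, Nat.sub_add_cancel hk]
  rw [hn] at h
  linear_combination h

lemma coeff_prod_range_X_sub_C_pow_ne_zero [CommRing R] [IsDomain R] {a : R} {n : ℕ}
    (ha₀ : a ≠ 0) (ha : ∀ k, 0 < k → k ≤ n → a ^ k ≠ 1) {k : ℕ} (hk : k ≤ n) :
    (∏ j ∈ Finset.range n, (X - C (a ^ j))).coeff k ≠ 0 := by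
  induction hk using Nat.decreasingInduction with
  | self =>
    have hmonic : (∏ j ∈ Finset.range n, (X - C (a ^ j))).Monic :=
      monic_prod_of_monic _ _ fun j _ => monic_X_sub_C _
    have hlead := hmonic.coeff_natDegree
    rw [natDegree_prod_range_X_sub_C] at hlead
    exact hlead ▸ one_ne_zero
  | of_succ k hk ih =>
    intro h
    have hrec := coeff_prod_range_X_sub_C_pow_mul a hk
    rw [h, zero_mul, eq_comm] at hrec
    exact mul_ne_zero (mul_ne_zero ih (pow_ne_zero _ ha₀))
      (sub_ne_zero.mpr (ha (k + 1) k.succ_pos hk).symm) hrec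

theorem linearIndependent_scaleRoots [CommRing R] [IsDomain R] {g : R[X]} {n : ℕ}
    (hdeg : g.natDegree = n) (hcoeff : ∀ k ≤ n, g.coeff k ≠ 0) {v : Fin (n + 1) → R}
    (hv : Function.Injective v) : LinearIndependent R fun u => g.scaleRoots (v u) := by
  rw [Fintype.linearIndependent_iff]
  intro c hc
  refine congrFun (Matrix.eq_zero_of_forall_pow_sum_mul_pow_eq_zero hv fun m => ?_)
  have hm : (m : ℕ) ≤ n := Fin.is_le m
  have h := congrArg (coeff · (n - m)) hc
  simp only [finsetSum_coeff, coeff_smul, coeff_scaleRoots, hdeg, Nat.sub_sub_self hm,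
    smul_eq_mul, coeff_zero, mul_left_comm _ (g.coeff _), ← Finset.mul_sum] at h
  exact (mul_eq_zero.mp h).resolve_left (hcoeff _ (Nat.sub_le _ _))

end Polynomial

/-- Let `α` generate `𝔽_q^×`, `q ≥ ℓ + 2`, and let `i₁ < … < i_{ℓ+1}` be
nonnegative integers with `ℓ·i_{ℓ+1} + ℓ - 1 ≤ q - 2`. Then the `ℓ+1`
polynomials `f_u(x) = ∏_{j=0}^{ℓ-1} (x - α^{ℓ·i_u + j})` are linearly
independent over `𝔽_q`. -/
theorem shifted_root_products_linearIndependent (q ℓ : ℕ) (hℓ : 1 ≤ ℓ)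
    (hq2 : ℓ + 2 ≤ q)
    (F : Type) [Field F] [Fintype F] (hq : Fintype.card F = q)
    (α : Fˣ) (hα : ∀ x : Fˣ, x ∈ Subgroup.zpowers α)
    (i : Fin (ℓ + 1) → ℕ) (hi : StrictMono i)
    (hibound : ℓ * i (Fin.last ℓ) + ℓ - 1 ≤ q - 2)
    (f : Fin (ℓ + 1) → Polynomial F)
    (hf : ∀ u, f u = ∏ j ∈ Finset.range ℓ, (X - C ((α : F) ^ (ℓ * i u + j)))) :
    LinearIndependent F f := by
  have horder : orderOf (α : F) = q - 1 := by
    rw [orderOf_units, orderOf_eq_card_of_forall_mem_zpowers hα, Nat.card_units,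
      Nat.card_eq_fintype_card, hq]
  have hscale : f = fun u => (∏ j ∈ Finset.range ℓ, (X - C ((α : F) ^ j))).scaleRoots
      ((α : F) ^ (ℓ * i u)) := by
    funext u
    simp_rw [hf, prod_X_sub_C_scaleRoots, ← pow_add, add_comm]
  have hinj : Function.Injective fun u => (α : F) ^ (ℓ * i u) := by
    have hlt (u : Fin (ℓ + 1)) : ℓ * i u < orderOf (α : F) := by
      have := Nat.mul_le_mul_left ℓ (hi.monotone (Fin.le_last u))
      omega
    intro u w h
    exact hi.injective (Nat.eq_of_mul_eq_mul_left hℓ (pow_injOn_Iio_orderOf (hlt u) (hlt w) h))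
  rw [hscale]
  refine linearIndependent_scaleRoots (natDegree_prod_range_X_sub_C _ ℓ) (fun k hk => ?_) hinj
  exact coeff_prod_range_X_sub_C_pow_ne_zero (Units.ne_zero α)
    (fun m hm hmℓ => pow_ne_one_of_lt_orderOf hm.ne' (by omega)) hk
end

section
/- Let q be a prime power, ℓ an integer with 1 ≤ ℓ ≤ q − 2, and α a generator of 𝔽_q^×. Then every coefficient of the polynomial g(x) = (x − 1)(x − α)(x − α²)⋯(x − α^{ℓ−1}) ∈ 𝔽_q[x] is nonzero; i.e., for each 0 ≤ s ≤ ℓ, the coefficient of x^s in g is a nonzero element of 𝔽_q. -/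
/-!
If the coefficient of `x^s` in `g` vanished, `g` would have at most `ℓ` nonzero terms
`c_d x^d`, with exponents `d ≤ ℓ < q - 1` so that the nodes `α^d` are pairwise distinct.
Evaluating `g` at its roots `α^j = (α^d)^j`, `j < ℓ`, then gives a Vandermonde system in
the `c_d` whose only solution is zero, contradicting that `g` is monic.
-/

open Polynomial Finset

namespace Polynomial

theorem card_support_le_natDegree_of_coeff_eq_zero {R : Type*} [Semiring R] {p : R[X]} {s : ℕ}
    (hs : s ≤ p.natDegree) (h : p.coeff s = 0) : #p.support ≤ p.natDegree := by
  have hsub : p.support ⊆ (range (p.natDegree + 1)).erase s := fun d hd =>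
    mem_erase.2 ⟨fun hds => mem_support_iff.1 hd (hds ▸ h),
      mem_range.2 (Nat.lt_succ_of_le (le_natDegree_of_mem_supp d hd))⟩
  simpa [card_erase_of_mem (mem_range.2 (Nat.lt_succ_of_le hs))] using card_le_card hsub

theorem eq_zero_of_eval_pow_eq_zero {R : Type*} [CommRing R] [IsDomain R] {p : R[X]} {β : R}
    (hβ : Set.InjOn (β ^ ·) p.support) (hp : ∀ j < #p.support, p.eval (β ^ j) = 0) :
    p = 0 := by
  let e := p.support.equivFin.symm
  have hinj : Function.Injective fun i => β ^ (e i : ℕ) := fun i i' h =>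
    e.injective (Subtype.ext (hβ (e i).2 (e i').2 h))
  have hsum : ∀ j : Fin #p.support,
      ∑ i : Fin #p.support, p.coeff (e i) * (β ^ (e i : ℕ)) ^ (j : ℕ) = 0 := by
    intro j
    rw [← hp j j.2, eval_eq_sum, Polynomial.sum_def, ← sum_coe_sort p.support, ← e.sum_comp]
    exact sum_congr rfl fun i _ => by ring
  have hcoeff := Matrix.eq_zero_of_forall_pow_sum_mul_pow_eq_zero hinj hsum
  ext d
  by_contra hd
  obtain ⟨i, hi⟩ := e.surjective ⟨d, mem_support_iff.2 hd⟩
  exact hd (by simpa [hi] using congrFun hcoeff i)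

end Polynomial

theorem rs_generator_coeffs_ne_zero_general (q ℓ : ℕ) (hℓq : ℓ ≤ q - 2)
    (F : Type) [Field F] [Fintype F] (hq : Fintype.card F = q)
    (α : Fˣ) (hα : ∀ x : Fˣ, x ∈ Subgroup.zpowers α) :
    ∀ s : ℕ, s ≤ ℓ →
      (∏ j ∈ Finset.range ℓ, (X - C ((α : F) ^ j))).coeff s ≠ 0 := by
  classical
  intro s hs hcoeff
  set g : F[X] := ∏ j ∈ range ℓ, (X - C ((α : F) ^ j))
  have hmonic : g.Monic := monic_prod_of_monic _ _ fun j _ => monic_X_sub_C _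
  have hdeg : g.natDegree = ℓ := by
    rw [natDegree_prod _ _ fun j _ => X_sub_C_ne_zero _]
    simp only [natDegree_X_sub_C, sum_const, card_range, smul_eq_mul, mul_one]
  have horder : orderOf (α : F) = q - 1 := by
    rw [orderOf_units, orderOf_eq_card_of_forall_mem_zpowers hα, Nat.card_eq_fintype_card,
      Fintype.card_units, hq]
  have hcard : #g.support ≤ ℓ :=
    (card_support_le_natDegree_of_coeff_eq_zero (hs.trans_eq hdeg.symm) hcoeff).trans_eq hdeg
  refine hmonic.ne_zero (eq_zero_of_eval_pow_eq_zero (β := (α : F)) ?_ fun j hj => ?_)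
  · refine pow_injOn_Iio_orderOf.mono fun d hd => ?_
    have hdℓ : d ≤ ℓ := (le_natDegree_of_mem_supp d hd).trans_eq hdeg
    rw [Set.mem_Iio, horder]
    have hq2 : 1 < q := hq ▸ Fintype.one_lt_card
    omega
  · rw [eval_prod]
    exact prod_eq_zero (mem_range.2 (hj.trans_le hcard)) (by simp)

/-- All coefficients of the Reed–Solomon generator polynomial
`g(x) = (x - 1)(x - α)⋯(x - α^{ℓ-1})` are nonzero, where `α` generates
`𝔽_q^×` and `1 ≤ ℓ ≤ q - 2`. -/
theorem rs_generator_coeffs_ne_zero (q ℓ : ℕ) (hℓ : 1 ≤ ℓ) (hℓq : ℓ ≤ q - 2)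
    (F : Type) [Field F] [Fintype F] (hq : Fintype.card F = q)
    (α : Fˣ) (hα : ∀ x : Fˣ, x ∈ Subgroup.zpowers α) :
    ∀ s : ℕ, s ≤ ℓ →
      (∏ j ∈ Finset.range ℓ, (X - C ((α : F) ^ j))).coeff s ≠ 0 :=
  rs_generator_coeffs_ne_zero_general q ℓ hℓq F hq α hα
end
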